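/- Let G be a finite graph with Laplacian L, S ⊂ V a Λ-set (i.e. ‖φ‖ ≤ Λ‖Lφ‖ for all φ supported in S), and U = V ∖ S. If 0 < ω < 1/Λ, then U is a uniqueness set for E_ω(L): any two functions f, g ∈ E_ω(L) that agree on U agree on all of V. -/

import Mathlib

/-! If `f, g ∈ E_ω(L)` agree off `S`, then `h = f - g ∈ E_ω(L)` is supported in `S`. In an
orthonormal eigenbasis of the positive operator `L`, the coefficients of `h` along eigenvalues
`> ω` vanish, so only eigenvalues in `[0, ω]` occur and Parseval gives the Bernstein inequality
`‖L h‖ ≤ ω ‖h‖`. The Λ-set property then yields `‖h‖ ≤ Λ ‖L h‖ ≤ Λ ω ‖h‖` with `Λ ω < 1`,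
hence `h = 0`. -/

open Matrix

/-- The ℓ²-norm of a function on the vertices of a finite graph. -/
noncomputable def gnorm {V : Type*} [Fintype V] (f : V → ℝ) : ℝ :=
  Real.sqrt (∑ v, f v ^ 2)

/-- `E_ω(L)`: the span of eigenvectors of the combinatorial Laplacian `L`
whose eigenvalues are at most `ω`. -/
noncomputable def Eomega {V : Type*} [Fintype V] [DecidableEq V]
    (G : SimpleGraph V) [DecidableRel G.Adj] (ω : ℝ) : Submodule ℝ (V → ℝ) :=
  Submodule.span ℝ
    {f : V → ℝ | f ≠ 0 ∧ ∃ μ : ℝ, μ ≤ ω ∧ (G.lapMatrix ℝ).mulVec f = μ • f}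

namespace LinearMap

variable {𝕜 E : Type*} [RCLike 𝕜] [NormedAddCommGroup E] [InnerProductSpace 𝕜 E]

def spectralSubspaceLE (T : E →ₗ[𝕜] E) (ω : ℝ) : Submodule 𝕜 E :=
  Submodule.span 𝕜 {x | ∃ μ : ℝ, μ ≤ ω ∧ T x = (μ : 𝕜) • x}

variable [FiniteDimensional 𝕜 E] {T : E →ₗ[𝕜] E} {ω : ℝ} {x : E}

theorem IsSymmetric.inner_eigenvectorBasis_eq_zero_of_mem_spectralSubspaceLE
    (hT : T.IsSymmetric) {n : ℕ} (hn : Module.finrank 𝕜 E = n) {i : Fin n}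
    (hi : ω < hT.eigenvalues hn i) (hx : x ∈ T.spectralSubspaceLE ω) :
    inner 𝕜 (hT.eigenvectorBasis hn i) x = 0 := by
  induction hx using Submodule.span_induction with
  | mem y hy =>
    obtain ⟨μ, hμω, hTy⟩ := hy
    have hne : (hT.eigenvalues hn i : 𝕜) ≠ μ := mod_cast (hμω.trans_lt hi).ne'
    exact hT.orthogonalFamily_eigenspaces hne
      ⟨_, Module.End.mem_eigenspace_iff.mpr (hT.apply_eigenvectorBasis hn i)⟩
      ⟨y, Module.End.mem_eigenspace_iff.mpr hTy⟩
  | zero => exact inner_zero_right _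
  | add y z _ _ hy hz => rw [inner_add_right, hy, hz, add_zero]
  | smul a y _ hy => rw [inner_smul_right, hy, mul_zero]

theorem IsPositive.norm_apply_le_of_mem_spectralSubspaceLE (hT : T.IsPositive) (hω : 0 ≤ ω)
    (hx : x ∈ T.spectralSubspaceLE ω) : ‖T x‖ ≤ ω * ‖x‖ := by
  have hT' := hT.isSymmetric
  set b := hT'.eigenvectorBasis rfl
  have hcoeff (i) : ‖inner 𝕜 (b i) (T x)‖ ^ 2 ≤ ω ^ 2 * ‖inner 𝕜 (b i) x‖ ^ 2 := by
    have hTx : inner 𝕜 (b i) (T x) = hT'.eigenvalues rfl i * inner 𝕜 (b i) x := by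
      rw [← hT', hT'.apply_eigenvectorBasis, inner_smul_left, RCLike.conj_ofReal]
    rw [hTx, norm_mul, mul_pow, RCLike.norm_ofReal]
    by_cases hi : ω < hT'.eigenvalues rfl i
    · rw [hT'.inner_eigenvectorBasis_eq_zero_of_mem_spectralSubspaceLE rfl hi hx]
      simp
    · gcongr
      rw [abs_of_nonneg (hT.nonneg_eigenvalues rfl i)]
      exact not_lt.mp hi
  have hsq : ‖T x‖ ^ 2 ≤ (ω * ‖x‖) ^ 2 := by
    rw [← b.sum_sq_norm_inner_right, mul_pow, ← b.sum_sq_norm_inner_right, Finset.mul_sum]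
    exact Finset.sum_le_sum fun i _ ↦ hcoeff i
  exact (pow_le_pow_iff_left₀ (norm_nonneg _) (by positivity) two_ne_zero).mp hsq

end LinearMap

theorem gnorm_eq_norm_toLp {V : Type*} [Fintype V] (f : V → ℝ) :
    gnorm f = ‖WithLp.toLp 2 f‖ := by
  simp only [gnorm, EuclideanSpace.norm_eq, Real.norm_eq_abs, sq_abs]

namespace SimpleGraph

variable {V : Type*} [Fintype V] [DecidableEq V] (G : SimpleGraph V) [DecidableRel G.Adj]

def IsLambdaSet (S : Set V) (Λ : ℝ) : Prop :=
  ∀ φ : V → ℝ, (∀ v, v ∉ S → φ v = 0) → gnorm φ ≤ Λ * gnorm ((G.lapMatrix ℝ).mulVec φ)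

variable {G} {ω : ℝ} {f : V → ℝ}

theorem toLp_mem_spectralSubspaceLE_of_mem_Eomega (hf : f ∈ Eomega G ω) :
    WithLp.toLp 2 f ∈ (G.lapMatrix ℝ).toEuclideanLin.spectralSubspaceLE ω := by
  have hle : Eomega G ω ≤ ((G.lapMatrix ℝ).toEuclideanLin.spectralSubspaceLE ω).comap
      (WithLp.linearEquiv 2 ℝ (V → ℝ)).symm.toLinearMap := by
    refine Submodule.span_le.mpr ?_
    rintro y ⟨-, μ, hμω, hLy⟩
    exact Submodule.subset_span ⟨μ, hμω, congrArg (WithLp.toLp 2) hLy⟩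
  exact hle hf

theorem gnorm_lapMatrix_mulVec_le_of_mem_Eomega (hω : 0 ≤ ω) (hf : f ∈ Eomega G ω) :
    gnorm (G.lapMatrix ℝ *ᵥ f) ≤ ω * gnorm f := by
  rw [gnorm_eq_norm_toLp, gnorm_eq_norm_toLp]
  exact (Matrix.isPositive_toEuclideanLin_iff.mpr (G.posSemidef_lapMatrix ℝ)
    ).norm_apply_le_of_mem_spectralSubspaceLE hω (toLp_mem_spectralSubspaceLE_of_mem_Eomega hf)

theorem IsLambdaSet.eq_zero_of_mem_Eomega {S : Set V} {Λ : ℝ} (hS : G.IsLambdaSet S Λ)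
    (hΛ : 0 ≤ Λ) (hω : 0 ≤ ω) (hΛω : Λ * ω < 1) (hf : f ∈ Eomega G ω)
    (hfS : ∀ v, v ∉ S → f v = 0) : f = 0 := by
  have hle : gnorm f ≤ Λ * ω * gnorm f := calc
    gnorm f ≤ Λ * gnorm (G.lapMatrix ℝ *ᵥ f) := hS f hfS
    _ ≤ Λ * (ω * gnorm f) := by gcongr; exact gnorm_lapMatrix_mulVec_le_of_mem_Eomega hω hf
    _ = Λ * ω * gnorm f := by ring
  have hzero : gnorm f = 0 := by
    nlinarith [show 0 ≤ gnorm f from Real.sqrt_nonneg _]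
  rwa [gnorm_eq_norm_toLp, norm_eq_zero, WithLp.toLp_eq_zero] at hzero

end SimpleGraph

/-- If `S` is a `Λ`-set and `0 < ω < 1/Λ`, then `U = V \ S` is a uniqueness set
for `E_ω(L)`: functions in `E_ω(L)` that agree on `U` agree everywhere. -/
theorem stmt_3 {V : Type*} [Fintype V] [DecidableEq V]
    (G : SimpleGraph V) [DecidableRel G.Adj]
    (S : Set V) (Λ : ℝ) (hΛ : 0 < Λ)
    (hS : ∀ φ : V → ℝ, (∀ v, v ∉ S → φ v = 0) →
      gnorm φ ≤ Λ * gnorm ((G.lapMatrix ℝ).mulVec φ))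
    (ω : ℝ) (hω0 : 0 < ω) (hω : ω < 1 / Λ)
    (f g : V → ℝ) (hf : f ∈ Eomega G ω) (hg : g ∈ Eomega G ω)
    (hfg : ∀ u ∈ Sᶜ, f u = g u) :
    f = g := by
  have hΛω : Λ * ω < 1 := by rwa [lt_div_iff₀ hΛ, mul_comm] at hω
  have hsub : f - g = 0 := SimpleGraph.IsLambdaSet.eq_zero_of_mem_Eomega hS hΛ.le hω0.le hΛω
    (sub_mem hf hg) fun v hv ↦ sub_eq_zero.mpr (hfg v hv)
  exact sub_eq_zero.mp hsub
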